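/- Let (C_n, p) be a generic framework on the n-cycle in R^1 with f forward edges and b backward edges (f + b = n, f ≥ 1, b ≥ 1). Then every nonzero equilibrium stress matrix Ω of (C_n,p) has signature (f−1, 2, b−1) or (b−1, 2, f−1) (counting positive, zero, and negative eigenvalues). -/

import Mathlib

open Matrix

/-- Number of positive eigenvalues of a (Hermitian) real matrix. -/
noncomputable def posCount {n : ℕ} (A : Matrix (Fin n) (Fin n) ℝ) : ℕ :=
  if h : A.IsHermitian then Fintype.card {i // 0 < h.eigenvalues i} else 0

/-- Number of negative eigenvalues of a (Hermitian) real matrix. -/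
noncomputable def negCount {n : ℕ} (A : Matrix (Fin n) (Fin n) ℝ) : ℕ :=
  if h : A.IsHermitian then Fintype.card {i // h.eigenvalues i < 0} else 0

/-- Number of zero eigenvalues of a (Hermitian) real matrix. -/
noncomputable def zeroCount {n : ℕ} (A : Matrix (Fin n) (Fin n) ℝ) : ℕ :=
  if h : A.IsHermitian then Fintype.card {i // h.eigenvalues i = 0} else 0

/-- `Ω` is an equilibrium stress matrix of the one-dimensional framework on the cycle
(with vertices `0, 1, …, n+2` in cyclic order): symmetric, supported on the diagonal and
the cycle edges, with zero row sums and satisfying the equilibrium condition. -/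
def IsCycleStressMatrix (n : ℕ) (p : Fin (n + 3) → ℝ)
    (Ω : Matrix (Fin (n + 3)) (Fin (n + 3)) ℝ) : Prop :=
  Ω.IsHermitian ∧
  (∀ i j, Ω i j ≠ 0 → i = j ∨ j = i + 1 ∨ i = j + 1) ∧
  (∀ i, ∑ j, Ω i j = 0) ∧
  (∀ i, ∑ j, Ω i j * p j = 0)

/-!
A stress matrix of the cycle is a weighted Laplacian: `x ⬝ᵥ Ω *ᵥ x = ∑ wᵢ (xᵢ - xᵢ₊₁)²` with
`wᵢ = -Ω i (i + 1)`. In dimension one, equilibrium at each vertex says that `wᵢ (p (i + 1) - p i)`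
takes the same value on every edge; genericity makes all edge lengths nonzero and `Ω ≠ 0` makes
that value nonzero, so the weights carry the forward/backward sign pattern of the edges, up to
one global sign. Imposing `x 0 = 0` and `xᵢ = xᵢ₊₁` across every edge of
nonpositive weight cuts out a subspace of dimension at least `#{wᵢ > 0} - 1` on which the form
is positive definite, and symmetrically for the negative weights. Together with the two kernel
vectors `1` and `p` these three lower bounds add up to the size of the matrix, so all are
equalities.
-/

namespace Matrix.IsHermitian

variable {ι : Type*} [Fintype ι] [DecidableEq ι] {A : Matrix ι ι ℝ}

lemma dotProduct_mulVec_self_eq_sum_eigenvalues (hA : A.IsHermitian) (x : ι → ℝ) :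
    x ⬝ᵥ A *ᵥ x = ∑ i, hA.eigenvalues i *
      (star (hA.eigenvectorUnitary : Matrix ι ι ℝ) *ᵥ x) i ^ 2 := by
  conv_lhs => rw [hA.spectral_theorem, Unitary.conjStarAlgAut_apply]
  rw [← mulVec_mulVec, ← mulVec_mulVec, dotProduct_mulVec, star_eq_conjTranspose,
    mulVec_conjTranspose, star_trivial, star_trivial]
  simp only [dotProduct, mulVec_diagonal, Function.comp_apply, RCLike.ofReal_real_eq_id, id]
  exact Finset.sum_congr rfl fun i _ => by ring

lemma finrank_le_card_pos_smul_eigenvalues (hA : A.IsHermitian) (σ : ℝ)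
    (W : Submodule ℝ (ι → ℝ)) (hW : ∀ x ∈ W, x ≠ 0 → 0 < σ * (x ⬝ᵥ A *ᵥ x)) :
    Module.finrank ℝ W ≤ Fintype.card {i // 0 < σ * hA.eigenvalues i} := by
  set U := (hA.eigenvectorUnitary : Matrix ι ι ℝ)
  let ψ : (ι → ℝ) →ₗ[ℝ] ({i // 0 < σ * hA.eigenvalues i} → ℝ) :=
    LinearMap.pi fun j => (LinearMap.proj j.1).comp (star U).mulVecLin
  suffices Function.Injective (ψ.domRestrict W) by
    simpa using LinearMap.finrank_le_finrank_of_injective this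
  rw [← LinearMap.ker_eq_bot, LinearMap.ker_eq_bot']
  rintro ⟨x, hx⟩ hψx
  by_contra hx0
  have hcoord : ∀ i, 0 < σ * hA.eigenvalues i → (star U *ᵥ x) i = 0 := fun i hi => by
    simpa [ψ] using congrFun hψx ⟨i, hi⟩
  have hnonpos : σ * (x ⬝ᵥ A *ᵥ x) ≤ 0 := by
    rw [hA.dotProduct_mulVec_self_eq_sum_eigenvalues, Finset.mul_sum]
    refine Finset.sum_nonpos fun i _ => ?_
    by_cases hi : 0 < σ * hA.eigenvalues i
    · rw [hcoord i hi]; simp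
    · rw [← mul_assoc]
      exact mul_nonpos_of_nonpos_of_nonneg (not_lt.1 hi) (sq_nonneg _)
  exact hnonpos.not_gt (hW x hx (by simpa using hx0))

end Matrix.IsHermitian

section Signature

variable {N : ℕ} {A : Matrix (Fin N) (Fin N) ℝ}

lemma posCount_eq_card (hA : A.IsHermitian) :
    posCount A = Fintype.card {i // 0 < hA.eigenvalues i} := dif_pos hA

lemma negCount_eq_card (hA : A.IsHermitian) :
    negCount A = Fintype.card {i // hA.eigenvalues i < 0} := dif_pos hA

lemma zeroCount_eq_card (hA : A.IsHermitian) :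
    zeroCount A = Fintype.card {i // hA.eigenvalues i = 0} := dif_pos hA

lemma posCount_add_zeroCount_add_negCount (hA : A.IsHermitian) :
    posCount A + zeroCount A + negCount A = N := by
  rw [posCount_eq_card hA, zeroCount_eq_card hA, negCount_eq_card hA]
  simp only [Fintype.card_subtype, Finset.card_filter, ← Finset.sum_add_distrib]
  conv_rhs => rw [← Fintype.card_fin N, Fintype.card, Finset.card_eq_sum_ones]
  refine Finset.sum_congr rfl fun i _ => ?_
  rcases lt_trichotomy (hA.eigenvalues i) 0 with h | h | h
  · simp [h, h.ne, h.not_gt]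
  · simp [h]
  · simp [h, h.ne', h.not_gt]

lemma zeroCount_eq_finrank_ker (hA : A.IsHermitian) :
    zeroCount A = Module.finrank ℝ (LinearMap.ker A.mulVecLin) := by
  have hrank := hA.rank_eq_card_non_zero_eigs
  have hsplit := Fintype.card_subtype_compl (fun i : Fin N => hA.eigenvalues i ≠ 0)
  have hnullity := LinearMap.finrank_range_add_finrank_ker A.mulVecLin
  simp only [not_not, Fintype.card_fin] at hsplit
  rw [Module.finrank_fin_fun] at hnullity
  rw [Matrix.rank] at hrank
  rw [zeroCount_eq_card hA, hsplit]
  omega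

lemma finrank_le_posCount (hA : A.IsHermitian) (W : Submodule ℝ (Fin N → ℝ))
    (hW : ∀ x ∈ W, x ≠ 0 → 0 < x ⬝ᵥ A *ᵥ x) : Module.finrank ℝ W ≤ posCount A := by
  simpa [posCount_eq_card hA] using
    hA.finrank_le_card_pos_smul_eigenvalues 1 W (by simpa using hW)

lemma finrank_le_negCount (hA : A.IsHermitian) (W : Submodule ℝ (Fin N → ℝ))
    (hW : ∀ x ∈ W, x ≠ 0 → x ⬝ᵥ A *ᵥ x < 0) : Module.finrank ℝ W ≤ negCount A := by
  simpa [negCount_eq_card hA] using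
    hA.finrank_le_card_pos_smul_eigenvalues (-1) W (by simpa using hW)

lemma two_le_zeroCount_of_linearIndependent (hA : A.IsHermitian) {u v : Fin N → ℝ}
    (hu : A *ᵥ u = 0) (hv : A *ᵥ v = 0)
    (huv : LinearIndependent ℝ ![u, v]) : 2 ≤ zeroCount A := by
  have hspan : Submodule.span ℝ (Set.range ![u, v]) ≤ LinearMap.ker A.mulVecLin := by
    rw [Submodule.span_le, Set.range_subset_iff]
    intro k
    fin_cases k <;> simpa [Matrix.mulVecLin_apply]
  rw [zeroCount_eq_finrank_ker hA]
  calc 2 = Module.finrank ℝ (Submodule.span ℝ (Set.range ![u, v])) := by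
        simp [finrank_span_eq_card huv]
    _ ≤ _ := Submodule.finrank_mono hspan

end Signature

section CycleForm

variable {N : ℕ} [NeZero N]

open Fin.NatCast in
lemma Fin.apply_eq_apply_zero_of_forall_apply_add_one {α : Type*} {x : Fin N → α}
    (h : ∀ i, x (i + 1) = x i) (i : Fin N) : x i = x 0 := by
  have hk : ∀ k : ℕ, x (k : Fin N) = x 0 := by
    intro k
    induction k with
    | zero => simp
    | succ k ih => rw [Nat.cast_succ, h, ih]
  simpa [Fin.cast_val_eq_self] using hk i.val

/-- The subspace is `x 0 = 0`, `x j = x (j + 1)` whenever `w j ≤ 0`. -/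
lemma exists_posDef_submodule_of_cycle_sum (w : Fin N → ℝ) :
    ∃ W : Submodule ℝ (Fin N → ℝ),
      (Finset.univ.filter fun i => 0 < w i).card ≤ Module.finrank ℝ W + 1 ∧
      ∀ x ∈ W, x ≠ 0 → 0 < ∑ i, w i * (x i - x (i + 1)) ^ 2 := by
  let Φ : (Fin N → ℝ) →ₗ[ℝ] ({j // w j ≤ 0} → ℝ) × ℝ :=
    (LinearMap.pi fun j =>
      (LinearMap.proj j.1 : (Fin N → ℝ) →ₗ[ℝ] ℝ) - LinearMap.proj (j.1 + 1)).prod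
        (LinearMap.proj 0)
  refine ⟨LinearMap.ker Φ, ?_, fun x hx hx0 => ?_⟩
  · have hrank := LinearMap.finrank_range_add_finrank_ker Φ
    have hrange := (LinearMap.range Φ).finrank_le
    have hsplit := Finset.card_filter_add_card_filter_not (s := Finset.univ)
      fun i : Fin N => 0 < w i
    simp only [Module.finrank_prod, Module.finrank_fintype_fun_eq_card, Fintype.card_fin,
      Module.finrank_self, Fintype.card_subtype, not_lt, Finset.card_univ] at hrank hrange hsplit
    omega
  · have hflat : ∀ j, w j ≤ 0 → x j = x (j + 1) := fun j hj => by
      simpa [Φ, sub_eq_zero] using congrFun (congrArg Prod.fst hx) ⟨j, hj⟩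
    have hx₀ : x 0 = 0 := by simpa [Φ] using congrArg Prod.snd hx
    have hterm : ∀ i, 0 ≤ w i * (x i - x (i + 1)) ^ 2 := fun i => by
      rcases le_or_gt (w i) 0 with hi | hi
      · simp [hflat i hi]
      · positivity
    refine (Finset.sum_nonneg fun i _ => hterm i).lt_of_ne fun hsum => hx0 ?_
    have hstep : ∀ i, x (i + 1) = x i := fun i => by
      have := (Finset.sum_eq_zero_iff_of_nonneg fun i _ => hterm i).1 hsum.symm i
        (Finset.mem_univ i)
      rcases le_or_gt (w i) 0 with hi | hi
      · exact (hflat i hi).symm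
      · rw [mul_eq_zero, or_iff_right hi.ne', sq_eq_zero_iff, sub_eq_zero] at this
        exact this.symm
    funext i
    rw [Fin.apply_eq_apply_zero_of_forall_apply_add_one hstep i, hx₀, Pi.zero_apply]

open Finset in
theorem signature_of_dotProduct_mulVec_self_eq_cycle_sum {A : Matrix (Fin N) (Fin N) ℝ}
    {w : Fin N → ℝ} (hA : A.IsHermitian)
    (hq : ∀ x, x ⬝ᵥ A *ᵥ x = ∑ i, w i * (x i - x (i + 1)) ^ 2) (hw : ∀ i, w i ≠ 0)
    (hker : 2 ≤ zeroCount A) :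
    posCount A = #{i | 0 < w i} - 1 ∧ zeroCount A = 2 ∧ negCount A = #{i | w i < 0} - 1 := by
  obtain ⟨Wpos, hcard_pos, hWpos⟩ := exists_posDef_submodule_of_cycle_sum w
  obtain ⟨Wneg, hcard_neg, hWneg⟩ := exists_posDef_submodule_of_cycle_sum (-w)
  have hpos := finrank_le_posCount hA Wpos fun x hx hx0 => hq x ▸ hWpos x hx hx0
  have hneg := finrank_le_negCount hA Wneg fun x hx hx0 => by
    simpa [hq, Finset.sum_neg_distrib] using hWneg x hx hx0
  have hsplit := card_filter_add_card_filter_not (s := univ) fun i : Fin N => 0 < w i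
  have hneg_iff : ∀ i, ¬0 < w i ↔ w i < 0 := fun i => not_lt.trans (hw i).le_iff_lt
  simp only [hneg_iff, Pi.neg_apply, neg_pos, card_univ, Fintype.card_fin] at hsplit hcard_neg
  have htotal := posCount_add_zeroCount_add_negCount hA
  omega

end CycleForm

section CycleStress

variable {n : ℕ} {Ω : Matrix (Fin (n + 3)) (Fin (n + 3)) ℝ}

lemma Fin.add_one_ne_sub_one (i : Fin (n + 3)) : i + 1 ≠ i - 1 := by
  intro h
  have h2 : i + (1 + 1) = i := by rw [← add_assoc, h, sub_add_cancel]
  rw [add_eq_left, Fin.ext_iff, Fin.val_add, Fin.val_one, Fin.val_zero,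
    Nat.mod_eq_of_lt (by omega)] at h2
  omega

/-- The weighted Laplacian of the cycle `0, 1, …, n + 2` with edge weights `-Ω i (i + 1)`. -/
def IsCycleLaplacian (Ω : Matrix (Fin (n + 3)) (Fin (n + 3)) ℝ) : Prop :=
  Ω.IsHermitian ∧ (∀ i j, Ω i j ≠ 0 → i = j ∨ j = i + 1 ∨ i = j + 1) ∧ ∀ i, ∑ j, Ω i j = 0

/-- For `x = p` and a stress matrix `Ω`, minus the stress on the edge `i → i + 1` times its
signed length. -/
def edgeFlow (Ω : Matrix (Fin (n + 3)) (Fin (n + 3)) ℝ) (x : Fin (n + 3) → ℝ)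
    (i : Fin (n + 3)) : ℝ :=
  Ω i (i + 1) * (x (i + 1) - x i)

lemma mulVec_apply_eq_edgeFlow_sub (hΩ : IsCycleLaplacian Ω) (x : Fin (n + 3) → ℝ)
    (i : Fin (n + 3)) :
    (Ω *ᵥ x) i = edgeFlow Ω x i - edgeFlow Ω x (i - 1) := by
  obtain ⟨hherm, hsupp, hrow⟩ := hΩ
  have hsymm : Ω i (i - 1) = Ω (i - 1) (i - 1 + 1) := by
    rw [sub_add_cancel, ← hherm.apply, star_trivial]
  have hvanish : ∀ j, j ≠ i + 1 ∧ j ≠ i - 1 → Ω i j * (x j - x i) = 0 := by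
    rintro j ⟨hj₁, hj₂⟩
    by_contra h
    rcases hsupp i j (left_ne_zero_of_mul h) with rfl | rfl | rfl
    · simp at h
    · exact hj₁ rfl
    · exact hj₂ (add_sub_cancel_right j 1).symm
  calc (Ω *ᵥ x) i = ∑ j, Ω i j * (x j - x i) := by
        simp [mulVec, dotProduct, mul_sub, Finset.sum_sub_distrib, ← Finset.sum_mul, hrow]
    _ = Ω i (i + 1) * (x (i + 1) - x i) + Ω i (i - 1) * (x (i - 1) - x i) :=
        Fintype.sum_eq_add _ _ (Fin.add_one_ne_sub_one i) hvanish
    _ = edgeFlow Ω x i - edgeFlow Ω x (i - 1) := by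
        rw [edgeFlow, edgeFlow, hsymm, sub_add_cancel]
        ring

lemma edgeFlow_eq_of_mulVec_eq_zero (hΩ : IsCycleLaplacian Ω) {x : Fin (n + 3) → ℝ}
    (hx : Ω *ᵥ x = 0) (i : Fin (n + 3)) : edgeFlow Ω x i = edgeFlow Ω x 0 := by
  refine Fin.apply_eq_apply_zero_of_forall_apply_add_one (fun i => ?_) i
  have := mulVec_apply_eq_edgeFlow_sub hΩ x (i + 1)
  rw [hx, Pi.zero_apply, add_sub_cancel_right] at this
  linarith

lemma dotProduct_mulVec_self_eq_cycle_sum (hΩ : IsCycleLaplacian Ω) (x : Fin (n + 3) → ℝ) :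
    x ⬝ᵥ Ω *ᵥ x = ∑ i, -Ω i (i + 1) * (x i - x (i + 1)) ^ 2 := by
  have hshift : ∑ i, x i * edgeFlow Ω x (i - 1) = ∑ i, x (i + 1) * edgeFlow Ω x i :=
    Fintype.sum_equiv (Equiv.subRight 1) _ _ fun i => by simp
  calc x ⬝ᵥ Ω *ᵥ x = ∑ i, x i * (edgeFlow Ω x i - edgeFlow Ω x (i - 1)) := by
        simp only [dotProduct, mulVec_apply_eq_edgeFlow_sub hΩ]
    _ = ∑ i, (x i - x (i + 1)) * edgeFlow Ω x i := by
        simp only [mul_sub, Finset.sum_sub_distrib, hshift, sub_mul]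
    _ = ∑ i, -Ω i (i + 1) * (x i - x (i + 1)) ^ 2 :=
        Finset.sum_congr rfl fun i _ => by rw [edgeFlow]; ring

lemma eq_zero_of_forall_apply_add_one_eq_zero (hΩ : IsCycleLaplacian Ω)
    (h : ∀ i, Ω i (i + 1) = 0) : Ω = 0 := by
  have h' : ∀ i, Ω (i - 1) i = 0 := fun i => by simpa using h (i - 1)
  have hmul : ∀ x, Ω *ᵥ x = 0 := fun x => funext fun i => by
    simp [mulVec_apply_eq_edgeFlow_sub hΩ, edgeFlow, h, h']
  ext i j
  simpa using congrFun (hmul (Pi.single j 1)) i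

end CycleStress

lemma linearIndependent_one_of_apply_ne {ι : Type*} {p : ι → ℝ} {i j : ι} (hp : p i ≠ p j) :
    LinearIndependent ℝ ![1, p] := by
  refine LinearIndependent.pair_iff.2 fun s t hst => ?_
  have hi := congrFun hst i
  have hj := congrFun hst j
  simp only [Pi.add_apply, Pi.smul_apply, Pi.one_apply, smul_eq_mul, Pi.zero_apply] at hi hj
  have ht : t = 0 := by
    have : t * (p i - p j) = 0 := by linear_combination hi - hj
    exact (mul_eq_zero.1 this).resolve_right (sub_ne_zero.2 hp)
  exact ⟨by simpa [ht] using hi, ht⟩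

open Finset in
lemma card_filter_pos_eq_and_card_filter_neg_eq_of_mul_pos {ι : Type*} [Fintype ι]
    {a d : ι → ℝ} (h : ∀ i, 0 < a i * d i) :
    #{i | 0 < a i} = #{i | 0 < d i} ∧ #{i | a i < 0} = #{i | d i < 0} :=
  ⟨congrArg card (filter_congr fun i _ => pos_iff_pos_of_mul_pos (h i)),
    congrArg card (filter_congr fun i _ => neg_iff_neg_of_mul_pos (h i))⟩

theorem stmt8_general (n : ℕ) (p : Fin (n + 3) → ℝ)
    (hgen : AlgebraicIndependent ℚ p)
    (f b : ℕ)
    (hf : f = (Finset.univ.filter fun i : Fin (n + 3) => p i < p (i + 1)).card)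
    (hb : b = (Finset.univ.filter fun i : Fin (n + 3) => p (i + 1) < p i).card)
    (Ω : Matrix (Fin (n + 3)) (Fin (n + 3)) ℝ)
    (hΩ : IsCycleStressMatrix n p Ω) (hne : Ω ≠ 0) :
    (posCount Ω = f - 1 ∧ zeroCount Ω = 2 ∧ negCount Ω = b - 1) ∨
    (posCount Ω = b - 1 ∧ zeroCount Ω = 2 ∧ negCount Ω = f - 1) := by
  obtain ⟨hherm, hsupp, hrow, hequil⟩ := hΩ
  have hL : IsCycleLaplacian Ω := ⟨hherm, hsupp, hrow⟩
  have hp : Ω *ᵥ p = 0 := funext hequil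
  have hedge : ∀ i : Fin (n + 3), p (i + 1) - p i ≠ 0 := fun i h =>
    add_eq_left.not.2 one_ne_zero (hgen.injective (sub_eq_zero.1 h))
  set c := edgeFlow Ω p 0
  have hflow : ∀ i, Ω i (i + 1) * (p (i + 1) - p i) = c := edgeFlow_eq_of_mulVec_eq_zero hL hp
  have hc : c ≠ 0 := fun hc => hne <| eq_zero_of_forall_apply_add_one_eq_zero hL fun i =>
    (mul_eq_zero.1 ((hflow i).trans hc)).resolve_right (hedge i)
  have hw : ∀ i, -Ω i (i + 1) ≠ 0 := fun i h => hc <| by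
    rw [← hflow i, neg_eq_zero.1 h, zero_mul]
  have hker : 2 ≤ zeroCount Ω := two_le_zeroCount_of_linearIndependent hherm
    (funext fun i => by simpa [mulVec, dotProduct] using hrow i) hp
    (linearIndependent_one_of_apply_ne (hedge 0 ∘ sub_eq_zero.2))
  obtain ⟨hpos, hzero, hneg⟩ :=
    signature_of_dotProduct_mulVec_self_eq_cycle_sum hherm
      (dotProduct_mulVec_self_eq_cycle_sum hL) hw hker
  rcases hc.lt_or_gt with hc | hc
  · obtain ⟨hfwd, hbwd⟩ := card_filter_pos_eq_and_card_filter_neg_eq_of_mul_pos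
      (a := fun i => -Ω i (i + 1)) (d := fun i => p (i + 1) - p i) fun i => by
        linarith [hflow i]
    simp only [sub_pos, sub_neg] at hfwd hbwd
    exact .inl ⟨by rw [hpos, hfwd, hf], hzero, by rw [hneg, hbwd, hb]⟩
  · obtain ⟨hbwd, hfwd⟩ := card_filter_pos_eq_and_card_filter_neg_eq_of_mul_pos
      (a := fun i => -Ω i (i + 1)) (d := fun i => p i - p (i + 1)) fun i => by
        linarith [hflow i]
    simp only [sub_pos, sub_neg] at hfwd hbwd
    exact .inr ⟨by rw [hpos, hbwd, hb], hzero, by rw [hneg, hfwd, hf]⟩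

/-- For a generic framework on the `(n+3)`-cycle in `ℝ¹` with `f` forward
edges and `b` backward edges, every nonzero equilibrium stress matrix has signature
`(f-1, 2, b-1)` or `(b-1, 2, f-1)`. -/
theorem stmt8 (n : ℕ) (p : Fin (n + 3) → ℝ)
    (hgen : AlgebraicIndependent ℚ p)
    (f b : ℕ)
    (hf : f = (Finset.univ.filter fun i : Fin (n + 3) => p i < p (i + 1)).card)
    (hb : b = (Finset.univ.filter fun i : Fin (n + 3) => p (i + 1) < p i).card)
    (hfb : f + b = n + 3) (hf1 : 1 ≤ f) (hb1 : 1 ≤ b)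
    (Ω : Matrix (Fin (n + 3)) (Fin (n + 3)) ℝ)
    (hΩ : IsCycleStressMatrix n p Ω) (hne : Ω ≠ 0) :
    (posCount Ω = f - 1 ∧ zeroCount Ω = 2 ∧ negCount Ω = b - 1) ∨
    (posCount Ω = b - 1 ∧ zeroCount Ω = 2 ∧ negCount Ω = f - 1) :=
  stmt8_general n p hgen f b hf hb Ω hΩ hne
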